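/- arXiv:2605.26635 — 3 statements merged into one kernel-verified Lean document; each statement's English description precedes it below -/
import Mathlib

section
/- Adequacy of the semantic model: if the empty typing context semantically types a specification S (i.e., ∅ ⊨ S), then S is consistent, meaning for every input map ρ_in there exists a total output map ρ_out with (ρ_in, ρ_out) ∈ ⟦S⟧. -/
/-- Streams of optional integer values. -/
def RStream : Type := ℕ → Option ℤ

/-- `w₁` is less defined than `w₂`. -/
def LessDef (w₁ w₂ : RStream) : Prop := ∀ n, w₁ n = none ∨ w₁ n = w₂ n

/-- Last defined value of `w` at or before `n`. -/
def Last (w : RStream) : ℕ → Option ℤ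
  | 0 => w 0
  | n+1 => match w (n+1) with
    | some v => some v
    | none => Last w n

/-- Semantics of hold accesses. -/
def Hold (w : RStream) (n : ℕ) (v : Option ℤ) : Option ℤ :=
  match Last w n with
  | some u => some u
  | none => v

/-- Semantics of prev accesses. -/
def Prev (w : RStream) (n : ℕ) (v : Option ℤ) : Option ℤ :=
  match w n, n with
  | none, _ => none
  | some _, 0 => v
  | some _, m+1 =>
    match Last w m with
    | some u => some u
    | none => v

/-- Pacing annotations: positive boolean formulas over input variables. -/
inductive Pacing (Vi : Type) where
  | pvar (x : Vi)
  | top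
  | pand (τ₁ τ₂ : Pacing Vi)
  | por (τ₁ τ₂ : Pacing Vi)

/-- Denotation of pacing annotations as sets of time points. -/
def PacingDen {Vi : Type} (ρi : Vi → RStream) : Pacing Vi → Set ℕ
  | .pvar x => {n | ρi x n ≠ none}
  | .top => Set.univ
  | .pand τ₁ τ₂ => PacingDen ρi τ₁ ∩ PacingDen ρi τ₂
  | .por τ₁ τ₂ => PacingDen ρi τ₁ ∪ PacingDen ρi τ₂

/-- Semantic refinement of pacing annotations. -/
def Refines {Vi : Type} (τ τ' : Pacing Vi) : Prop :=
  ∀ ρi : Vi → RStream, PacingDen ρi τ ⊆ PacingDen ρi τ'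

/-- The set of τ-well-paced streams. -/
def WellPaced {Vi : Type} (τ : Pacing Vi) (ρi : Vi → RStream) : Set RStream :=
  {w | ∀ n, n ∈ PacingDen ρi τ ↔ w n ≠ none}

/-- Stream expressions over input variables `Vi` and output variables `Vo`. -/
inductive Expr (Vi Vo : Type) where
  | const (v : ℤ)
  | varIn (x : Vi)
  | varOut (x : Vo)
  | prevIn (x : Vi) (e : Expr Vi Vo)
  | prevOut (x : Vo) (e : Expr Vi Vo)
  | holdIn (x : Vi) (e : Expr Vi Vo)
  | holdOut (x : Vo) (e : Expr Vi Vo)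
  | add (e₁ e₂ : Expr Vi Vo)

/-- Addition propagating undefinedness. -/
def addOpt : Option ℤ → Option ℤ → Option ℤ
  | some a, some b => some (a + b)
  | _, _ => none

/-- Total denotational semantics of stream expressions. -/
def ExprDen {Vi Vo : Type} (ρi : Vi → RStream) (ρo : Vo → RStream) : Expr Vi Vo → RStream
  | .const v => fun _ => some v
  | .varIn x => ρi x
  | .varOut x => ρo x
  | .prevIn x e => fun n => Prev (ρi x) n (ExprDen ρi ρo e n)
  | .prevOut x e => fun n => Prev (ρo x) n (ExprDen ρi ρo e n)
  | .holdIn x e => fun n => Hold (ρi x) n (ExprDen ρi ρo e n)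
  | .holdOut x e => fun n => Hold (ρo x) n (ExprDen ρi ρo e n)
  | .add e₁ e₂ => fun n => addOpt (ExprDen ρi ρo e₁ n) (ExprDen ρi ρo e₂ n)

/-- A partial output stream, viewed as a stream (undefined entries are the always-none stream). -/
def getStream (o : Option RStream) : RStream := o.getD (fun _ => none)

/-- Partial semantics of stream expressions w.r.t. a partial output map. -/
def PExprDen {Vi Vo : Type} (ρi : Vi → RStream) (ρo : Vo → Option RStream) : Expr Vi Vo → RStream
  | .const v => fun _ => some v
  | .varIn x => ρi x
  | .varOut x => getStream (ρo x)
  | .prevIn x e => fun n => Prev (ρi x) n (PExprDen ρi ρo e n)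
  | .prevOut x e => fun n => Prev (getStream (ρo x)) n (PExprDen ρi ρo e n)
  | .holdIn x e => fun n => Hold (ρi x) n (PExprDen ρi ρo e n)
  | .holdOut x e => fun n => Hold (getStream (ρo x)) n (PExprDen ρi ρo e n)
  | .add e₁ e₂ => fun n => addOpt (PExprDen ρi ρo e₁ n) (PExprDen ρi ρo e₂ n)

/-- Totalization of a partial output map by a total one. -/
def totalize {Vo : Type} (ρ₁ : Vo → Option RStream) (ρ₂ : Vo → RStream) : Vo → RStream :=
  fun x => (ρ₁ x).getD (ρ₂ x)

/-- An annotated stream equation `x @ τ := e`. -/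
structure Equ (Vi Vo : Type) where
  out : Vo
  pac : Pacing Vi
  expr : Expr Vi Vo

/-- Satisfaction of a single equation. -/
def SatEq {Vi Vo : Type} (eq : Equ Vi Vo) (ρi : Vi → RStream) (ρo : Vo → RStream) : Prop :=
  ρo eq.out ∈ WellPaced eq.pac ρi ∧ LessDef (ρo eq.out) (ExprDen ρi ρo eq.expr)

/-- Satisfaction of a specification (a list of equations). -/
def SatSpec {Vi Vo : Type} (S : List (Equ Vi Vo)) (ρi : Vi → RStream) (ρo : Vo → RStream) : Prop :=
  ∀ eq ∈ S, SatEq eq ρi ρo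

/-- Consistency: every input map admits a satisfying output map. -/
def Consistent {Vi Vo : Type} (S : List (Equ Vi Vo)) : Prop :=
  ∀ ρi : Vi → RStream, ∃ ρo : Vo → RStream, SatSpec S ρi ρo

/-- Typing contexts. -/
def Ctx (Vi Vo : Type) : Type := Vo → Option (Pacing Vi)

/-- Interpretation of typing contexts as sets of partial output maps. -/
def InCtx {Vi Vo : Type} (Γ : Ctx Vi Vo) (ρi : Vi → RStream) (ρo : Vo → Option RStream) : Prop :=
  ∀ x, (Γ x = none ∧ ρo x = none) ∨
    ∃ τ w, Γ x = some τ ∧ ρo x = some w ∧ w ∈ WellPaced τ ρi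

/-- Typing rules for expressions. -/
inductive HasTy {Vi Vo : Type} (Γ : Ctx Vi Vo) : Expr Vi Vo → Pacing Vi → Prop where
  | const {v : ℤ} {τ} : HasTy Γ (.const v) τ
  | binop {e₁ e₂ τ} : HasTy Γ e₁ τ → HasTy Γ e₂ τ → HasTy Γ (.add e₁ e₂) τ
  | directOut {x τcan τ} : Γ x = some τcan → Refines τ τcan → HasTy Γ (.varOut x) τ
  | directIn {x τ} : Refines τ (.pvar x) → HasTy Γ (.varIn x) τ
  | prevOut {x τcan e τ} : Γ x = some τcan → HasTy Γ e τ → Refines τ τcan →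
      HasTy Γ (.prevOut x e) τ
  | prevIn {x e τ} : HasTy Γ e τ → Refines τ (.pvar x) → HasTy Γ (.prevIn x e) τ
  | holdOut {x e τ} : (Γ x).isSome → HasTy Γ e τ → HasTy Γ (.holdOut x e) τ
  | holdIn {x e τ} : HasTy Γ e τ → HasTy Γ (.holdIn x e) τ

/-- Typing rules for specifications. -/
inductive SpecTy {Vi Vo : Type} [DecidableEq Vo] : Ctx Vi Vo → List (Equ Vi Vo) → Prop where
  | empty {Γ} : SpecTy Γ []
  | equation {Γ x τ e S} : Γ x = none → HasTy Γ e τ →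
      SpecTy (Function.update Γ x (some τ)) S → SpecTy Γ (⟨x, τ, e⟩ :: S)

/-- Semantic typing of expressions. -/
def SemTyExpr {Vi Vo : Type} (Γ : Ctx Vi Vo) (e : Expr Vi Vo) (τ : Pacing Vi) : Prop :=
  ∀ (ρi : Vi → RStream) (ρo : Vo → Option RStream), InCtx Γ ρi ρo →
    ∀ n ∈ PacingDen ρi τ, PExprDen ρi ρo e n ≠ none

/-- Semantic typing of specifications. -/
def SemTySpec {Vi Vo : Type} (Γ : Ctx Vi Vo) (S : List (Equ Vi Vo)) : Prop :=
  ∀ (ρi : Vi → RStream) (ρ₁ : Vo → Option RStream), InCtx Γ ρi ρ₁ →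
    ∃ ρ₂ : Vo → RStream, SatSpec S ρi (totalize ρ₁ ρ₂)

theorem adequacy {Vi Vo : Type} (S : List (Equ Vi Vo))
    (h : SemTySpec (fun _ => none) S) : Consistent S := by
  intro ρi
  obtain ⟨ρ₂, hρ₂⟩ := h ρi (fun _ => none) (fun x => Or.inl ⟨rfl, rfl⟩)
  exact ⟨totalize (fun _ => none) ρ₂, hρ₂⟩
end

section
/- Sound typing of expressions: if Γ ⊢ e : τ is derivable via the pacing typing rules, then Γ ⊨ e : τ, i.e., for every input map ρ_in, every partial output map ρ_out ∈ ⟦Γ⟧_{ρ_in}, and every n ∈ ⟦τ⟧_{ρ_in}, the partial denotation ⟦e⟧̄_{(ρ_in,ρ_out)}(n) ≠ none. -/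
/-! Induction on the typing derivation. Direct and `prev` accesses are typed only at
`τ ⊨ τcan` (resp. `τ ⊨ x`), and the accessed stream is defined exactly on `⟦τcan⟧ ⊇ ⟦τ⟧`.
`Prev` at a point where its stream is defined, and `Hold` anywhere, return either an earlier
value of the stream or the default, which is defined by the induction hypothesis. -/

theorem addOpt_ne_none {a b : Option ℤ} (ha : a ≠ none) (hb : b ≠ none) :
    addOpt a b ≠ none := by
  obtain ⟨a, rfl⟩ := Option.ne_none_iff_exists'.mp ha
  obtain ⟨b, rfl⟩ := Option.ne_none_iff_exists'.mp hb
  simp [addOpt]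

theorem Hold_ne_none (w : RStream) (n : ℕ) {v : Option ℤ} (hv : v ≠ none) :
    Hold w n v ≠ none := by
  unfold Hold
  split <;> simp_all

theorem Prev_ne_none {w : RStream} {n : ℕ} {v : Option ℤ} (hw : w n ≠ none) (hv : v ≠ none) :
    Prev w n v ≠ none := by
  unfold Prev
  split
  · contradiction
  · exact hv
  · split <;> simp_all

theorem InCtx.getStream_ne_none {Vi Vo : Type} {Γ : Ctx Vi Vo} {ρi : Vi → RStream}
    {ρo : Vo → Option RStream} (hctx : InCtx Γ ρi ρo) {x : Vo} {τ τcan : Pacing Vi}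
    (hx : Γ x = some τcan) (href : Refines τ τcan) {n : ℕ} (hn : n ∈ PacingDen ρi τ) :
    getStream (ρo x) n ≠ none := by
  rcases hctx x with ⟨hnone, _⟩ | ⟨τ', w, hτ', hw, hwp⟩
  · simp [hx] at hnone
  · obtain rfl : τ' = τcan := Option.some_injective _ (hτ'.symm.trans hx)
    rw [getStream, hw]
    exact (hwp n).mp (href ρi hn)

theorem sound_typing_expr {Vi Vo : Type} (Γ : Ctx Vi Vo) (e : Expr Vi Vo) (τ : Pacing Vi)
    (h : HasTy Γ e τ) : SemTyExpr Γ e τ := by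
  induction h with
  | const => intro _ _ _ _ _; simp [PExprDen]
  | binop _ _ ih₁ ih₂ =>
    intro ρi ρo hctx n hn
    exact addOpt_ne_none (ih₁ ρi ρo hctx n hn) (ih₂ ρi ρo hctx n hn)
  | directOut hx href =>
    intro ρi ρo hctx n hn
    exact hctx.getStream_ne_none hx href hn
  | directIn href =>
    intro ρi _ _ n hn
    exact href ρi hn
  | prevOut hx _ href ih =>
    intro ρi ρo hctx n hn
    exact Prev_ne_none (hctx.getStream_ne_none hx href hn) (ih ρi ρo hctx n hn)
  | prevIn _ href ih =>
    intro ρi ρo hctx n hn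
    exact Prev_ne_none (href ρi hn) (ih ρi ρo hctx n hn)
  | holdOut _ _ ih =>
    intro ρi ρo hctx n hn
    exact Hold_ne_none _ n (ih ρi ρo hctx n hn)
  | holdIn _ ih =>
    intro ρi ρo hctx n hn
    exact Hold_ne_none _ n (ih ρi ρo hctx n hn)
end

section
/- Inconsistency witness: if a and b are distinct input variables, the two-equation specification {x @a := a; y @b := x} (where y synchronously accesses x) is not consistent: there exists an input map ρ_in (e.g., one where b is defined at a time point where a is not) for which no output map ρ_out satisfies both equations. -/
/-! Choose inputs where `b` is always defined and `a` never is. The first equation then forces `x`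
to be undefined everywhere, while the second forces `y` to be defined everywhere and to agree
there with `x`. -/

def onlyDefined {Vi : Type} [DecidableEq Vi] (b : Vi) : Vi → RStream :=
  fun v _ => if v = b then some 0 else none

lemma LessDef.ne_none {w₁ w₂ : RStream} (h : LessDef w₁ w₂) {n : ℕ} (hn : w₁ n ≠ none) :
    w₂ n ≠ none :=
  (h n).elim (absurd · hn) (· ▸ hn)

namespace SatEq

variable {Vi Vo : Type} {eq : Equ Vi Vo} {ρi : Vi → RStream} {ρo : Vo → RStream} {n : ℕ}

lemma out_eq_none (h : SatEq eq ρi ρo) (hn : n ∉ PacingDen ρi eq.pac) : ρo eq.out n = none :=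
  not_not.mp fun hne => hn ((h.1 n).mpr hne)

lemma expr_ne_none (h : SatEq eq ρi ρo) (hn : n ∈ PacingDen ρi eq.pac) :
    ExprDen ρi ρo eq.expr n ≠ none :=
  h.2.ne_none ((h.1 n).mp hn)

end SatEq

theorem inconsistency_witness_general {Vi Vo : Type} (a b : Vi) (x y : Vo)
    (hab : a ≠ b) :
    ¬ Consistent [⟨x, .pvar a, .varIn a⟩, (⟨y, .pvar b, .varOut x⟩ : Equ Vi Vo)] := by
  classical
  intro hcons
  obtain ⟨ρo, hsat⟩ := hcons (onlyDefined b)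
  have hx : ρo x 0 = none :=
    (hsat _ List.mem_cons_self).out_eq_none (by simp [PacingDen, onlyDefined, hab])
  exact (hsat _ (List.mem_cons_of_mem _ List.mem_cons_self)).expr_ne_none (n := 0)
    (by simp [PacingDen, onlyDefined]) hx

theorem inconsistency_witness {Vi Vo : Type} (a b : Vi) (x y : Vo)
    (hab : a ≠ b) (hxy : x ≠ y) :
    ¬ Consistent [⟨x, .pvar a, .varIn a⟩, (⟨y, .pvar b, .varOut x⟩ : Equ Vi Vo)] :=
  inconsistency_witness_general a b x y hab
end
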